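/- Let π₁,…,πₙ be a smooth family of mutually orthogonal projections on a Hilbert space H over an open set in ℂ with π₁ + … + πₙ = 1, and define A'_{ij} = πᵢ ∘ ∂/∂z ∘ πⱼ and A''_{ij} = πᵢ ∘ ∂/∂z̄ ∘ πⱼ. Fix a subset σ ⊂ {1,…,n} and set π = ∑_{i∈σ} πᵢ, π⊥ = ∑_{i∉σ} πᵢ. Suppose that A'_{ij} = 0 = A''_{ji} whenever (i > j and both i,j ∈ σ or both i,j ∉ σ) or (i < j and exactly one of i, j lies in σ). Then for all s ∈ σ and t ∉ σ one has πₜ(∂''_{E⊥} ∘ A'_E − A'_E ∘ ∂''_E)πₛ = 0, where A'_E = π⊥∂_z π, ∂''_E = π∂_z̄π, ∂''_{E⊥} = π⊥∂_z̄π⊥; consequently the subbundle E determined by π is harmonic, i.e. A'_E ∘ ∂''_E = ∂''_{E⊥} ∘ A'_E. -/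

import Mathlib

variable {H : Type*} [NormedAddCommGroup H] [InnerProductSpace ℂ H] [CompleteSpace H]

/-- Wirtinger derivative `∂f/∂z` of an `H`-valued function on `ℂ`. -/
noncomputable def dZ (f : ℂ → H) (z : ℂ) : H :=
  ((1 : ℂ) / 2) • (fderiv ℝ f z 1) - (Complex.I / 2) • (fderiv ℝ f z Complex.I)

/-- Wirtinger derivative `∂f/∂z̄` of an `H`-valued function on `ℂ`. -/
noncomputable def dZbar (f : ℂ → H) (z : ℂ) : H :=
  ((1 : ℂ) / 2) • (fderiv ℝ f z 1) + (Complex.I / 2) • (fderiv ℝ f z Complex.I)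

/-- The operator `P ∘ ∂/∂z ∘ Q` on `H`-valued functions. -/
noncomputable def sandZ (P Q : ℂ → H →L[ℂ] H) (f : ℂ → H) (z : ℂ) : H :=
  P z (dZ (fun w => Q w (f w)) z)

/-- The operator `P ∘ ∂/∂z̄ ∘ Q` on `H`-valued functions. -/
noncomputable def sandZbar (P Q : ℂ → H →L[ℂ] H) (f : ℂ → H) (z : ℂ) : H :=
  P z (dZbar (fun w => Q w (f w)) z)

set_option linter.unusedSectionVars false

lemma contDiff_fderiv_apply {f : ℂ → H} (hf : ContDiff ℝ (⊤ : ℕ∞) f) (v : ℂ) :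
    ContDiff ℝ (⊤ : ℕ∞) (fun z => fderiv ℝ f z v) :=
  (hf.fderiv_right (by simp)).clm_apply contDiff_const

lemma contDiff_dZ {f : ℂ → H} (hf : ContDiff ℝ (⊤ : ℕ∞) f) : ContDiff ℝ (⊤ : ℕ∞) (dZ f) :=
  ((contDiff_fderiv_apply hf 1).const_smul _).sub
    ((contDiff_fderiv_apply hf Complex.I).const_smul _)

lemma contDiff_dZbar {f : ℂ → H} (hf : ContDiff ℝ (⊤ : ℕ∞) f) : ContDiff ℝ (⊤ : ℕ∞) (dZbar f) :=
  ((contDiff_fderiv_apply hf 1).const_smul _).add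
    ((contDiff_fderiv_apply hf Complex.I).const_smul _)

lemma dZ_sum {ι : Type*} (u : Finset ι) (h : ι → ℂ → H) {z : ℂ}
    (hh : ∀ i ∈ u, DifferentiableAt ℝ (h i) z) :
    dZ (fun w => ∑ i ∈ u, h i w) z = ∑ i ∈ u, dZ (h i) z := by
  simp only [dZ, fderiv_fun_sum hh, ContinuousLinearMap.sum_apply, Finset.smul_sum,
    Finset.sum_sub_distrib]

lemma dZbar_sum {ι : Type*} (u : Finset ι) (h : ι → ℂ → H) {z : ℂ}
    (hh : ∀ i ∈ u, DifferentiableAt ℝ (h i) z) :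
    dZbar (fun w => ∑ i ∈ u, h i w) z = ∑ i ∈ u, dZbar (h i) z := by
  simp only [dZbar, fderiv_fun_sum hh, ContinuousLinearMap.sum_apply, Finset.smul_sum,
    Finset.sum_add_distrib]

lemma dZ_zero (z : ℂ) : dZ (fun _ => (0 : H)) z = 0 := by simp [dZ]

lemma dZbar_zero (z : ℂ) : dZbar (fun _ => (0 : H)) z = 0 := by simp [dZbar]

lemma fderiv_dZ_apply {f : ℂ → H} (hf : ContDiff ℝ (⊤ : ℕ∞) f) (z u : ℂ) :
    fderiv ℝ (dZ f) z u = ((1:ℂ)/2) • (fderiv ℝ (fderiv ℝ f) z u 1)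
      - (Complex.I/2) • (fderiv ℝ (fderiv ℝ f) z u Complex.I) := by
  have hF : DifferentiableAt ℝ (fderiv ℝ f) z :=
    ((hf.fderiv_right (by exact WithTop.coe_le_coe.mpr le_top)).differentiable one_ne_zero) z
  have hv : ∀ v : ℂ, fderiv ℝ (fun w => fderiv ℝ f w v) z
      = (fderiv ℝ (fderiv ℝ f) z).flip v := by
    intro v
    rw [show (fun w => fderiv ℝ f w v) = fun w => (fderiv ℝ f w) ((fun _ : ℂ => v) w) from rfl,
      fderiv_clm_apply hF (differentiableAt_const v)]
    simp
  have h1 : DifferentiableAt ℝ (fun w => fderiv ℝ f w 1) z :=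
    hF.clm_apply (differentiableAt_const _)
  have h2 : DifferentiableAt ℝ (fun w => fderiv ℝ f w Complex.I) z :=
    hF.clm_apply (differentiableAt_const _)
  have : dZ f = fun w => ((1:ℂ)/2) • (fderiv ℝ f w 1)
      - (Complex.I/2) • (fderiv ℝ f w Complex.I) := rfl
  rw [this, fderiv_fun_sub (f := fun w => ((1:ℂ)/2) • fderiv ℝ f w 1)
      (g := fun w => (Complex.I/2) • fderiv ℝ f w Complex.I) ((h1.const_smul _)) ((h2.const_smul _)),
    fderiv_fun_const_smul h1, fderiv_fun_const_smul h2]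
  simp [hv]

lemma fderiv_dZbar_apply {f : ℂ → H} (hf : ContDiff ℝ (⊤ : ℕ∞) f) (z u : ℂ) :
    fderiv ℝ (dZbar f) z u = ((1:ℂ)/2) • (fderiv ℝ (fderiv ℝ f) z u 1)
      + (Complex.I/2) • (fderiv ℝ (fderiv ℝ f) z u Complex.I) := by
  have hF : DifferentiableAt ℝ (fderiv ℝ f) z :=
    ((hf.fderiv_right (by exact WithTop.coe_le_coe.mpr le_top)).differentiable one_ne_zero) z
  have hv : ∀ v : ℂ, fderiv ℝ (fun w => fderiv ℝ f w v) z
      = (fderiv ℝ (fderiv ℝ f) z).flip v := by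
    intro v
    rw [show (fun w => fderiv ℝ f w v) = fun w => (fderiv ℝ f w) ((fun _ : ℂ => v) w) from rfl,
      fderiv_clm_apply hF (differentiableAt_const v)]
    simp
  have h1 : DifferentiableAt ℝ (fun w => fderiv ℝ f w 1) z :=
    hF.clm_apply (differentiableAt_const _)
  have h2 : DifferentiableAt ℝ (fun w => fderiv ℝ f w Complex.I) z :=
    hF.clm_apply (differentiableAt_const _)
  have : dZbar f = fun w => ((1:ℂ)/2) • (fderiv ℝ f w 1)
      + (Complex.I/2) • (fderiv ℝ f w Complex.I) := rfl
  rw [this, fderiv_fun_add (f := fun w => ((1:ℂ)/2) • fderiv ℝ f w 1)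
      (g := fun w => (Complex.I/2) • fderiv ℝ f w Complex.I) ((h1.const_smul _)) ((h2.const_smul _)),
    fderiv_fun_const_smul h1, fderiv_fun_const_smul h2]
  simp [hv]

lemma dZbar_dZ {f : ℂ → H} (hf : ContDiff ℝ (⊤ : ℕ∞) f) (z : ℂ) :
    dZbar (dZ f) z = dZ (dZbar f) z := by
  have hsymm : fderiv ℝ (fderiv ℝ f) z Complex.I 1 = fderiv ℝ (fderiv ℝ f) z 1 Complex.I :=
    second_derivative_symmetric
      (fun y => ((hf.differentiable (by simp)) y).hasFDerivAt)
      (((hf.fderiv_right (by exact WithTop.coe_le_coe.mpr le_top)).differentiable one_ne_zero z).hasFDerivAt) _ _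
  rw [show dZbar (dZ f) z = ((1:ℂ)/2) • (fderiv ℝ (dZ f) z 1)
      + (Complex.I/2) • (fderiv ℝ (dZ f) z Complex.I) from rfl]
  rw [show dZ (dZbar f) z = ((1:ℂ)/2) • (fderiv ℝ (dZbar f) z 1)
      - (Complex.I/2) • (fderiv ℝ (dZbar f) z Complex.I) from rfl]
  rw [fderiv_dZ_apply hf, fderiv_dZ_apply hf, fderiv_dZbar_apply hf, fderiv_dZbar_apply hf,
    hsymm]
  module

lemma contDiff_clmC {P : ℂ → H →L[ℂ] H} {h : ℂ → H}
    (hP : ContDiff ℝ (⊤ : ℕ∞) P) (hh : ContDiff ℝ (⊤ : ℕ∞) h) :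
    ContDiff ℝ (⊤ : ℕ∞) (fun u => P u (h u)) := by
  have h1 : ContDiff ℝ (⊤ : ℕ∞) (fun u => (P u).restrictScalars ℝ) :=
    (ContinuousLinearMap.restrictScalarsIsometry ℂ H H ℝ
      ℝ).toContinuousLinearMap.contDiff.comp hP
  exact h1.clm_apply hh

/-- Let `π₁,…,πₙ` be a smooth family of mutually orthogonal projections on
`H` with `∑πᵢ = 1`, let `A'_{ij} = πᵢ∂_zπⱼ`, `A''_{ij} = πᵢ∂_z̄πⱼ`, fix `σ ⊆ {1,…,n}` and put
`π = ∑_{i∈σ}πᵢ`, `π⊥ = ∑_{i∉σ}πᵢ`. If `A'_{ij} = 0 = A''_{ji}` whenever (`i > j` and `i, j`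
both in `σ` or both outside `σ`) or (`i < j` and exactly one of `i, j` lies in `σ`), then
for all `s ∈ σ`, `t ∉ σ` one has `πₜ(∂''_{E⊥}A'_E − A'_E∂''_E)πₛ = 0`; consequently the
subbundle `E` determined by `π` is harmonic: `A'_E ∘ ∂''_E = ∂''_{E⊥} ∘ A'_E`. -/
theorem holomorphic_flag_projection_harmonic
    {n : ℕ} (π : Fin n → ℂ → H →L[ℂ] H)
    (hsm : ∀ i, ContDiff ℝ (⊤ : ℕ∞) (π i))
    (hproj : ∀ i z, ((π i z).comp (π i z)) = π i z)
    (horth : ∀ i j, i ≠ j → ∀ z, ((π i z).comp (π j z)) = 0)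
    (hsa : ∀ i z, IsSelfAdjoint (π i z))
    (hsum : ∀ z, ∑ i, π i z = 1)
    (σ : Finset (Fin n))
    (hhol : ∀ i j : Fin n,
      ((j < i ∧ ((i ∈ σ ∧ j ∈ σ) ∨ (i ∉ σ ∧ j ∉ σ))) ∨
       (i < j ∧ ((i ∈ σ ∧ j ∉ σ) ∨ (i ∉ σ ∧ j ∈ σ)))) →
      ∀ f : ℂ → H, ContDiff ℝ (⊤ : ℕ∞) f → ∀ z : ℂ,
        sandZ (π i) (π j) f z = 0 ∧ sandZbar (π j) (π i) f z = 0) :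
    (∀ s ∈ σ, ∀ t ∉ σ, ∀ f : ℂ → H, ContDiff ℝ (⊤ : ℕ∞) f → ∀ z : ℂ,
      π t z (sandZbar (fun w => ∑ i ∈ σᶜ, π i w) (fun w => ∑ i ∈ σᶜ, π i w)
          (sandZ (fun w => ∑ i ∈ σᶜ, π i w) (fun w => ∑ i ∈ σ, π i w)
            (fun w => π s w (f w))) z
        - sandZ (fun w => ∑ i ∈ σᶜ, π i w) (fun w => ∑ i ∈ σ, π i w)
          (sandZbar (fun w => ∑ i ∈ σ, π i w) (fun w => ∑ i ∈ σ, π i w)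
            (fun w => π s w (f w))) z) = 0) ∧
    (∀ f : ℂ → H, ContDiff ℝ (⊤ : ℕ∞) f → ∀ z : ℂ,
      sandZ (fun w => ∑ i ∈ σᶜ, π i w) (fun w => ∑ i ∈ σ, π i w)
          (sandZbar (fun w => ∑ i ∈ σ, π i w) (fun w => ∑ i ∈ σ, π i w) f) z
        = sandZbar (fun w => ∑ i ∈ σᶜ, π i w) (fun w => ∑ i ∈ σᶜ, π i w)
          (sandZ (fun w => ∑ i ∈ σᶜ, π i w) (fun w => ∑ i ∈ σ, π i w) f) z) := by
  classical
  have hPsm : ContDiff ℝ (⊤ : ℕ∞) (fun w => ∑ i ∈ σ, π i w) := ContDiff.sum fun i _ => hsm i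
  have happly : ∀ (u : Finset (Fin n)) (w : ℂ) (x : H),
      (∑ i ∈ u, π i w) x = ∑ i ∈ u, π i w x := by
    intro u w x
    simp
  have hfull : ∀ (w : ℂ) (x : H), ∑ i, π i w x = x := by
    intro w x
    rw [← happly Finset.univ w x, hsum w]
    rfl
  have horth' : ∀ i j, i ≠ j → ∀ (w : ℂ) (x : H), π i w (π j w x) = 0 := by
    intro i j hij w x
    have h := horth i j hij w
    calc π i w (π j w x) = ((π i w).comp (π j w)) x := rfl
      _ = 0 := by rw [h]; rfl
  have hproj' : ∀ i (w : ℂ) (x : H), π i w (π i w x) = π i w x := by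
    intro i w x
    have h := hproj i w
    calc π i w (π i w x) = ((π i w).comp (π i w)) x := rfl
      _ = π i w x := by rw [h]
  have hsumproj : ∀ (u : Finset (Fin n)) (j : Fin n), j ∈ u → ∀ (w : ℂ) (x : H),
      (∑ i ∈ u, π i w) (π j w x) = π j w x := by
    intro u j hj w x
    rw [happly, Finset.sum_eq_single j (fun i _ hij => horth' i j hij w x)
      (fun h => absurd hj h)]
    exact hproj' j w x
  have hQQ : ∀ (u : Finset (Fin n)) (w : ℂ) (x : H),
      (∑ i ∈ u, π i w) ((∑ i ∈ u, π i w) x) = (∑ i ∈ u, π i w) x := by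
    intro u w x
    calc (∑ i ∈ u, π i w) ((∑ i ∈ u, π i w) x)
        = ∑ j ∈ u, (∑ i ∈ u, π i w) (π j w x) := by rw [happly u w x, map_sum]
      _ = ∑ j ∈ u, π j w x := Finset.sum_congr rfl fun j hj => hsumproj u j hj w x
      _ = (∑ i ∈ u, π i w) x := (happly u w x).symm
  have hπtU : ∀ (t : Fin n) (u : Finset (Fin n)), t ∈ u → ∀ (w : ℂ) (x : H),
      π t w ((∑ i ∈ u, π i w) x) = π t w x := by
    intro t u ht w x
    rw [happly, map_sum, Finset.sum_eq_single t
      (fun j _ hjt => horth' t j (Ne.symm hjt) w x) (fun h => absurd ht h)]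
    exact hproj' t w x
  -- the core identity
  have key : ∀ s ∈ σ, ∀ t ∉ σ, ∀ f : ℂ → H, ContDiff ℝ (⊤ : ℕ∞) f → ∀ z : ℂ,
      π t z (dZbar (fun w => (∑ i ∈ σᶜ, π i w) (dZ (fun u => π s u (f u)) w)) z)
        = π t z (dZ (fun w => (∑ i ∈ σ, π i w) (dZbar (fun u => π s u (f u)) w)) z) := by
    intro s hs t ht f hf z
    set g : ℂ → H := fun u => π s u (f u) with hgdef
    have hg : ContDiff ℝ (⊤ : ℕ∞) g := by rw [hgdef]; exact contDiff_clmC (hsm s) hf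
    have hdg : ContDiff ℝ (⊤ : ℕ∞) (dZ g) := contDiff_dZ hg
    have hdbg : ContDiff ℝ (⊤ : ℕ∞) (dZbar g) := contDiff_dZbar hg
    set a : Fin n → H := fun i => π t z (dZbar (fun w => π i w (dZ g w)) z) with ha
    set d : Fin n → H := fun i => π t z (dZ (fun w => π i w (dZbar g w)) z) with hd
    have hL : π t z (dZbar (fun w => (∑ i ∈ σᶜ, π i w) (dZ g w)) z) = ∑ i ∈ σᶜ, a i := by
      have e : (fun w => (∑ i ∈ σᶜ, π i w) (dZ g w))
          = fun w => ∑ i ∈ σᶜ, π i w (dZ g w) := funext fun w => happly σᶜ w (dZ g w)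
      rw [e, dZbar_sum _ _ (fun i _ => (contDiff_clmC (hsm i) hdg).differentiable (by simp) z),
        map_sum]
    have hR : π t z (dZ (fun w => (∑ i ∈ σ, π i w) (dZbar g w)) z) = ∑ i ∈ σ, d i := by
      have e : (fun w => (∑ i ∈ σ, π i w) (dZbar g w))
          = fun w => ∑ i ∈ σ, π i w (dZbar g w) := funext fun w => happly σ w (dZbar g w)
      rw [e, dZ_sum _ _ (fun i _ => (contDiff_clmC (hsm i) hdbg).differentiable (by simp) z),
        map_sum]
    have htot : ∑ i, a i = ∑ i, d i := by
      have h1 : dZbar (dZ g) z = ∑ i, dZbar (fun w => π i w (dZ g w)) z := by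
        conv_lhs => rw [show (dZ g) = fun w => ∑ i, π i w (dZ g w) from
          funext fun w => (hfull w _).symm]
        exact dZbar_sum Finset.univ _
          (fun i _ => (contDiff_clmC (hsm i) hdg).differentiable (by simp) z)
      have h2 : dZ (dZbar g) z = ∑ i, dZ (fun w => π i w (dZbar g w)) z := by
        conv_lhs => rw [show (dZbar g) = fun w => ∑ i, π i w (dZbar g w) from
          funext fun w => (hfull w _).symm]
        exact dZ_sum Finset.univ _
          (fun i _ => (contDiff_clmC (hsm i) hdbg).differentiable (by simp) z)
      calc ∑ i, a i = π t z (dZbar (dZ g) z) := by rw [h1, map_sum]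
        _ = π t z (dZ (dZbar g) z) := by rw [dZbar_dZ hg]
        _ = ∑ i, d i := by rw [h2, map_sum]
    rw [hL, hR]
    have hst' : s ≠ t := fun h => ht (h ▸ hs)
    rcases lt_or_gt_of_ne hst' with hst | hts
    · -- s < t : the σ-part of a and the σᶜ-part of d vanish termwise
      have hTa : ∀ i ∈ σ, a i = 0 := by
        intro i hi
        rcases lt_or_ge i t with hit | hti
        · exact (hhol i t (Or.inr ⟨hit, Or.inl ⟨hi, ht⟩⟩) (dZ g) hdg z).2
        · have hz0 : ∀ w, (π i w) (dZ g w) = 0 := fun w =>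
            (hhol i s (Or.inl ⟨lt_of_lt_of_le hst hti, Or.inl ⟨hi, hs⟩⟩) f hf w).1
          have e : (fun w => π i w (dZ g w)) = fun _ => (0 : H) := funext fun w => hz0 w
          show π t z (dZbar (fun w => π i w (dZ g w)) z) = 0
          rw [e, dZbar_zero, map_zero]
      have hTd : ∀ i ∈ σᶜ, d i = 0 := by
        intro i hi'
        have hi : i ∉ σ := Finset.mem_compl.mp hi'
        rcases lt_or_ge i t with hit | hti
        · exact (hhol t i (Or.inl ⟨hit, Or.inr ⟨ht, hi⟩⟩) (dZbar g) hdbg z).1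
        · have hz0 : ∀ w, (π i w) (dZbar g w) = 0 := fun w =>
            (hhol s i (Or.inr ⟨lt_of_lt_of_le hst hti, Or.inl ⟨hs, hi⟩⟩) f hf w).2
          have e : (fun w => π i w (dZbar g w)) = fun _ => (0 : H) := funext fun w => hz0 w
          show π t z (dZ (fun w => π i w (dZbar g w)) z) = 0
          rw [e, dZ_zero, map_zero]
      calc ∑ i ∈ σᶜ, a i = ∑ i ∈ σ, a i + ∑ i ∈ σᶜ, a i := by
            rw [Finset.sum_eq_zero hTa, zero_add]
        _ = ∑ i, a i := Finset.sum_add_sum_compl σ a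
        _ = ∑ i, d i := htot
        _ = ∑ i ∈ σ, d i + ∑ i ∈ σᶜ, d i := (Finset.sum_add_sum_compl σ d).symm
        _ = ∑ i ∈ σ, d i := by rw [Finset.sum_eq_zero hTd, add_zero]
    · -- t < s : the σᶜ-part of a and the σ-part of d vanish termwise
      have hSa : ∀ i ∈ σᶜ, a i = 0 := by
        intro i hi'
        have hi : i ∉ σ := Finset.mem_compl.mp hi'
        rcases lt_or_ge t i with hti | hit
        · exact (hhol i t (Or.inl ⟨hti, Or.inr ⟨hi, ht⟩⟩) (dZ g) hdg z).2
        · have hz0 : ∀ w, (π i w) (dZ g w) = 0 := fun w =>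
            (hhol i s (Or.inr ⟨lt_of_le_of_lt hit hts, Or.inr ⟨hi, hs⟩⟩) f hf w).1
          have e : (fun w => π i w (dZ g w)) = fun _ => (0 : H) := funext fun w => hz0 w
          show π t z (dZbar (fun w => π i w (dZ g w)) z) = 0
          rw [e, dZbar_zero, map_zero]
      have hSd : ∀ i ∈ σ, d i = 0 := by
        intro i hi
        rcases lt_or_ge t i with hti | hit
        · exact (hhol t i (Or.inr ⟨hti, Or.inr ⟨ht, hi⟩⟩) (dZbar g) hdbg z).1
        · have hz0 : ∀ w, (π i w) (dZbar g w) = 0 := fun w =>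
            (hhol s i (Or.inl ⟨lt_of_le_of_lt hit hts, Or.inl ⟨hs, hi⟩⟩) f hf w).2
          have e : (fun w => π i w (dZbar g w)) = fun _ => (0 : H) := funext fun w => hz0 w
          show π t z (dZ (fun w => π i w (dZbar g w)) z) = 0
          rw [e, dZ_zero, map_zero]
      rw [Finset.sum_eq_zero hSa, Finset.sum_eq_zero hSd]
  constructor
  · -- Statement (i)
    intro s hs t ht f hf z
    simp only [sandZ, sandZbar]
    rw [show (fun u => (∑ i ∈ σ, π i u) (π s u (f u))) = fun u => π s u (f u) from
      funext fun u => hsumproj σ s hs u (f u)]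
    rw [show (fun w => (∑ i ∈ σᶜ, π i w)
          ((∑ i ∈ σᶜ, π i w) (dZ (fun u => π s u (f u)) w)))
        = fun w => (∑ i ∈ σᶜ, π i w) (dZ (fun u => π s u (f u)) w) from
      funext fun w => hQQ σᶜ w _]
    rw [show (fun w => (∑ i ∈ σ, π i w)
          ((∑ i ∈ σ, π i w) (dZbar (fun u => π s u (f u)) w)))
        = fun w => (∑ i ∈ σ, π i w) (dZbar (fun u => π s u (f u)) w) from
      funext fun w => hQQ σ w _]
    rw [map_sub, hπtU t σᶜ (Finset.mem_compl.mpr ht) z _,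
      hπtU t σᶜ (Finset.mem_compl.mpr ht) z _, key s hs t ht f hf z, sub_self]
  · -- Statement (ii)
    intro f hf z
    simp only [sandZ, sandZbar]
    rw [show (fun w => (∑ i ∈ σ, π i w)
          ((∑ i ∈ σ, π i w) (dZbar (fun u => (∑ i ∈ σ, π i u) (f u)) w)))
        = fun w => (∑ i ∈ σ, π i w) (dZbar (fun u => (∑ i ∈ σ, π i u) (f u)) w) from
      funext fun w => hQQ σ w _]
    rw [show (fun w => (∑ i ∈ σᶜ, π i w)
          ((∑ i ∈ σᶜ, π i w) (dZ (fun u => (∑ i ∈ σ, π i u) (f u)) w)))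
        = fun w => (∑ i ∈ σᶜ, π i w) (dZ (fun u => (∑ i ∈ σ, π i u) (f u)) w) from
      funext fun w => hQQ σᶜ w _]
    have hsplit_bar : ∀ w : ℂ, dZbar (fun u => (∑ i ∈ σ, π i u) (f u)) w
        = ∑ s ∈ σ, dZbar (fun u => π s u (f u)) w := by
      intro w
      conv_lhs => rw [show (fun u => (∑ i ∈ σ, π i u) (f u))
          = fun u => ∑ s ∈ σ, π s u (f u) from funext fun u => happly σ u (f u)]
      exact dZbar_sum σ (fun s u => π s u (f u))
        (fun i _ => ((contDiff_clmC (hsm i) hf).differentiable (by simp)) w)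
    have hsplit : ∀ w : ℂ, dZ (fun u => (∑ i ∈ σ, π i u) (f u)) w
        = ∑ s ∈ σ, dZ (fun u => π s u (f u)) w := by
      intro w
      conv_lhs => rw [show (fun u => (∑ i ∈ σ, π i u) (f u))
          = fun u => ∑ s ∈ σ, π s u (f u) from funext fun u => happly σ u (f u)]
      exact dZ_sum σ (fun s u => π s u (f u))
        (fun i _ => ((contDiff_clmC (hsm i) hf).differentiable (by simp)) w)
    rw [show (fun w => (∑ i ∈ σ, π i w) (dZbar (fun u => (∑ i ∈ σ, π i u) (f u)) w))
        = fun w => ∑ s ∈ σ, (∑ i ∈ σ, π i w) (dZbar (fun u => π s u (f u)) w) from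
      funext fun w => by rw [hsplit_bar w, map_sum]]
    rw [show (fun w => (∑ i ∈ σᶜ, π i w) (dZ (fun u => (∑ i ∈ σ, π i u) (f u)) w))
        = fun w => ∑ s ∈ σ, (∑ i ∈ σᶜ, π i w) (dZ (fun u => π s u (f u)) w) from
      funext fun w => by rw [hsplit w, map_sum]]
    rw [dZ_sum σ (fun s w => (∑ i ∈ σ, π i w) (dZbar (fun u => π s u (f u)) w))
      (fun s _ => (contDiff_clmC hPsm (contDiff_dZbar (contDiff_clmC (hsm s) hf))).differentiable (by simp) z), map_sum]
    rw [dZbar_sum σ (fun s w => (∑ i ∈ σᶜ, π i w) (dZ (fun u => π s u (f u)) w))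
      (fun s _ => (contDiff_clmC (ContDiff.sum fun i _ => hsm i) (contDiff_dZ (contDiff_clmC (hsm s) hf))).differentiable (by simp) z), map_sum]
    refine Finset.sum_congr rfl fun s hsσ => ?_
    rw [happly σᶜ z _, happly σᶜ z _]
    exact Finset.sum_congr rfl fun t htc =>
      (key s hsσ t (Finset.mem_compl.mp htc) f hf z).symm
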